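/- arXiv:1911.12972 — 2 statements merged into one kernel-verified Lean document; each statement's English description precedes it below -/
import Mathlib

section
/- For every positive integer n, every real α with 0 < α ≤ 1/n and every real x ≥ 0, the second central moment satisfies Θ_{n,2}^[α](x) ≤ (3/n)·(x + 1/n) = (3/n)·η_n²(x). -/
open MeasureTheory Filter

noncomputable section

/-- The Szász basis function `e^(-nu) (nu)^i / i!`. -/
def szaszBasis (n i : ℕ) (u : ℝ) : ℝ :=
  Real.exp (-(n : ℝ) * u) * ((n : ℝ) * u) ^ i / (Nat.factorial i : ℝ)

/-- The rising factorial `x^(i,-α) = ∏_{j=0}^{i-1} (x + jα)` with increment `α`. -/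
def risingFac (x α : ℝ) (i : ℕ) : ℝ :=
  ∏ j ∈ Finset.range i, (x + (j : ℝ) * α)

/-- The Durrmeyer modification of the generalized Szász-Mirakjan operators:
`U_n^[α](f; x) = n Σ_i (1+nα)^(−x/α) (α+1/n)^(−i) x^(i,−α)/i! ∫_0^∞ e^(−nu)(nu)^i/i! f(u) du`. -/
def U (n : ℕ) (α : ℝ) (f : ℝ → ℝ) (x : ℝ) : ℝ :=
  (n : ℝ) * ∑' i : ℕ,
    (1 + (n : ℝ) * α) ^ (-x / α) * (α + 1 / (n : ℝ)) ^ (-(i : ℤ)) *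
      (risingFac x α i / (Nat.factorial i : ℝ)) *
      ∫ u in Set.Ioi (0 : ℝ), szaszBasis n i u * f u

/-- The `m`-th central moment `Θ_{n,m}^[α](x) = U_n^[α]((t−x)^m; x)`. -/
def theta (n : ℕ) (α : ℝ) (m : ℕ) (x : ℝ) : ℝ :=
  U n α (fun t => (t - x) ^ m) x

end

/-! The weights `w i` of `U n α · x` form a negative binomial (Pólya) distribution: the binomial
series `∑ (c)ᵢ sⁱ / i! = (1 - s)^(-c)` with `c = x / α`, `s = nα / (1 + nα)` shows `∑ w i = 1`, and
the shift `(i + 1) w_x (i + 1) = n x w_{x+α} i` gives the factorial moments `∑ i w i = n x` and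
`∑ i (i - 1) w i = n² x (x + α)`. Since `u · s_{n,i}(u) = (i + 1)/n · s_{n,i+1}(u)` and each Szász
basis function has integral `1/n`, the second central moment is exactly `α x + 2x/n + 2/n²`, and
`α ≤ 1/n` bounds it by `(3/n)(x + 1/n)`. -/

open scoped Nat
open Set

theorem Real.hasSum_ascPochhammer_eval_mul_pow_div_factorial (c : ℝ) {s : ℝ} (hs : |s| < 1) :
    HasSum (fun i => (ascPochhammer ℝ i).eval c * s ^ i / i !) ((1 - s) ^ (-c)) := by
  have h := (Real.one_div_one_sub_rpow_hasFPowerSeriesOnBall_zero c).hasSum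
    (y := s) (by simpa [enorm_eq_nnnorm, ← NNReal.coe_lt_coe] using hs)
  have hs1 : 0 ≤ 1 - s := by linarith [le_abs_self s]
  rw [zero_add, one_div, ← Real.rpow_neg hs1] at h
  refine h.congr_fun fun i => ?_
  rw [FormalMultilinearSeries.ofScalars_apply_eq, smul_eq_mul, ← Ring.multichoose_eq,
    ← Polynomial.ascPochhammer_smeval_eq_eval,
    ← Ring.factorial_nsmul_multichoose_eq_ascPochhammer, nsmul_eq_mul]
  field_simp

theorem szaszBasis_mul_self {n : ℕ} (hn : n ≠ 0) (i : ℕ) (u : ℝ) :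
    szaszBasis n i u * u = (i + 1) / n * szaszBasis n (i + 1) u := by
  simp only [szaszBasis, Nat.factorial_succ, pow_succ]
  push_cast
  field_simp

theorem integral_szaszBasis {n : ℕ} (hn : 0 < n) (i : ℕ) :
    ∫ u in Ioi 0, szaszBasis n i u = 1 / n := by
  have hn' : (0 : ℝ) < n := by exact_mod_cast hn
  have h := Real.integral_rpow_mul_exp_neg_mul_Ioi (a := i + 1) (by positivity) hn'
  rw [add_sub_cancel_right, Real.Gamma_nat_eq_factorial] at h
  calc ∫ u in Ioi 0, szaszBasis n i u
      = ∫ u in Ioi 0, (n : ℝ) ^ i / i ! * (u ^ (i : ℝ) * Real.exp (-(n * u))) := by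
        refine setIntegral_congr_fun measurableSet_Ioi fun u _ => ?_
        simp only [szaszBasis, Real.rpow_natCast, mul_pow, neg_mul]
        ring
    _ = 1 / n := by
        rw [integral_const_mul, h, ← Nat.cast_add_one, Real.rpow_natCast, pow_succ,
          one_div, inv_pow]
        field_simp

theorem integrableOn_szaszBasis {n : ℕ} (hn : 0 < n) (i : ℕ) :
    IntegrableOn (szaszBasis n i) (Ioi 0) :=
  Integrable.of_integral_ne_zero <| by rw [integral_szaszBasis hn]; positivity

theorem integral_szaszBasis_mul_sub_sq {n : ℕ} (hn : 0 < n) (x : ℝ) (i : ℕ) :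
    ∫ u in Ioi 0, szaszBasis n i u * (u - x) ^ 2
      = ((i + 1) * (i + 2) / n ^ 2 - 2 * x * (i + 1) / n + x ^ 2) / n := by
  have hn' : n ≠ 0 := hn.ne'
  have hexpand : ∀ u, szaszBasis n i u * (u - x) ^ 2
      = (i + 1) * (i + 2) / n ^ 2 * szaszBasis n (i + 2) u
        - 2 * x * (i + 1) / n * szaszBasis n (i + 1) u + x ^ 2 * szaszBasis n i u := by
    intro u
    have h1 := szaszBasis_mul_self hn' i u
    have h2 := szaszBasis_mul_self hn' (i + 1) u
    push_cast at h2
    linear_combination (u - 2 * x) * h1 + (i + 1) / n * h2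
  have hint (k : ℕ) (c : ℝ) : IntegrableOn (fun u => c * szaszBasis n k u) (Ioi 0) :=
    (integrableOn_szaszBasis hn k).const_mul c
  simp_rw [hexpand]
  rw [integral_add (by exact (hint _ _).sub (hint _ _)) (hint _ _),
    integral_sub (hint _ _) (hint _ _), integral_const_mul, integral_const_mul,
    integral_const_mul, integral_szaszBasis hn, integral_szaszBasis hn, integral_szaszBasis hn]
  ring

theorem risingFac_succ' (x α : ℝ) (i : ℕ) :
    risingFac x α (i + 1) = x * risingFac (x + α) α i := by
  simp only [risingFac, Finset.prod_range_succ', Nat.cast_add_one, Nat.cast_zero, zero_mul,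
    add_zero, add_mul, one_mul]
  rw [mul_comm]
  congr! 2 with j
  ring

theorem risingFac_eq_pow_mul_ascPochhammer_eval (x : ℝ) {α : ℝ} (hα : α ≠ 0) (i : ℕ) :
    risingFac x α i = α ^ i * (ascPochhammer ℝ i).eval (x / α) := by
  induction i with
  | zero => simp [risingFac]
  | succ i ih =>
    rw [risingFac, Finset.prod_range_succ, ← risingFac, ih, ascPochhammer_succ_eval, pow_succ]
    field_simp

noncomputable def durrmeyerWeight (n : ℕ) (α x : ℝ) (i : ℕ) : ℝ :=
  (1 + (n : ℝ) * α) ^ (-x / α) * (α + 1 / (n : ℝ)) ^ (-(i : ℤ)) *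
    (risingFac x α i / i !)

theorem U_eq_tsum (n : ℕ) (α : ℝ) (f : ℝ → ℝ) (x : ℝ) :
    U n α f x = n * ∑' i, durrmeyerWeight n α x i * ∫ u in Ioi 0, szaszBasis n i u * f u :=
  rfl

section durrmeyerWeight

variable {n : ℕ} {α : ℝ}

theorem hasSum_durrmeyerWeight (hn : 0 < n) (hα : 0 < α) (x : ℝ) :
    HasSum (durrmeyerWeight n α x) 1 := by
  have hd : 0 < α + 1 / n := by positivity
  have hq : 0 < 1 + n * α := by positivity
  have hs : |α / (α + 1 / n)| < 1 := by
    rw [abs_of_pos (by positivity), div_lt_one hd]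
    simp only [lt_add_iff_pos_right, one_div, inv_pos, Nat.cast_pos, hn]
  have h1s : 1 - α / (α + 1 / n) = (1 + n * α)⁻¹ := by
    field_simp
    ring
  have h := (Real.hasSum_ascPochhammer_eval_mul_pow_div_factorial (x / α) hs).mul_left
    ((1 + n * α) ^ (-x / α))
  rw [h1s, Real.inv_rpow hq.le, ← Real.rpow_neg hq.le, neg_div, ← Real.rpow_add hq,
    neg_neg, neg_add_cancel, Real.rpow_zero] at h
  refine h.congr_fun fun i => ?_
  rw [durrmeyerWeight, risingFac_eq_pow_mul_ascPochhammer_eval x hα.ne', zpow_neg, zpow_natCast,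
    div_pow, neg_div]
  ring

theorem succ_mul_durrmeyerWeight_succ (hn : 0 < n) (hα : 0 < α) (x : ℝ) (i : ℕ) :
    (i + 1) * durrmeyerWeight n α x (i + 1) = n * x * durrmeyerWeight n α (x + α) i := by
  have hq : 0 < 1 + n * α := by positivity
  have hshift : (1 + n * α) ^ (-x / α) = (1 + n * α) ^ (-(x + α) / α) * (1 + n * α) := by
    rw [← Real.rpow_add_one hq.ne']
    congr 1
    field_simp
    ring
  simp only [durrmeyerWeight, hshift, risingFac_succ', Nat.factorial_succ, zpow_neg, zpow_natCast,
    pow_succ]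
  push_cast
  field_simp
  ring

theorem hasSum_mul_durrmeyerWeight (hn : 0 < n) (hα : 0 < α) (x : ℝ) :
    HasSum (fun i => i * durrmeyerWeight n α x i) (n * x) := by
  rw [← hasSum_nat_add_iff' 1]
  simpa [succ_mul_durrmeyerWeight_succ hn hα] using
    (hasSum_durrmeyerWeight hn hα (x + α)).mul_left (n * x)

theorem hasSum_mul_sub_one_mul_durrmeyerWeight (hn : 0 < n) (hα : 0 < α) (x : ℝ) :
    HasSum (fun i => i * (i - 1) * durrmeyerWeight n α x i) (n ^ 2 * x * (x + α)) := by
  rw [← hasSum_nat_add_iff' 1, Finset.sum_range_one, Nat.cast_zero, zero_mul, zero_mul, sub_zero,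
    show (n : ℝ) ^ 2 * x * (x + α) = n * x * (n * (x + α)) by ring]
  refine ((hasSum_mul_durrmeyerWeight hn hα (x + α)).mul_left (n * x)).congr_fun fun i => ?_
  push_cast
  linear_combination i * succ_mul_durrmeyerWeight_succ hn hα x i

end durrmeyerWeight

theorem theta_two_eq {n : ℕ} (hn : 0 < n) {α : ℝ} (hα : 0 < α) (x : ℝ) :
    theta n α 2 x = α * x + 2 * x / n + 2 / n ^ 2 := by
  have hn' : (n : ℝ) ≠ 0 := by positivity
  have h := (((hasSum_mul_sub_one_mul_durrmeyerWeight hn hα x).mul_left (1 / (n : ℝ) ^ 3)).add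
    ((hasSum_mul_durrmeyerWeight hn hα x).mul_left (4 / n ^ 3 - 2 * x / n ^ 2))).add
    ((hasSum_durrmeyerWeight hn hα x).mul_left (2 / n ^ 3 - 2 * x / n ^ 2 + x ^ 2 / n))
  rw [theta, U_eq_tsum]
  simp_rw [integral_szaszBasis_mul_sub_sq hn]
  rw [(h.congr_fun fun i => ?_).tsum_eq]
  · field_simp
    ring
  · field_simp
    ring

theorem stmt6 (n : ℕ) (hn : 0 < n) (α : ℝ) (hα : 0 < α) (hαn : α ≤ 1 / n)
    (x : ℝ) (hx : 0 ≤ x) :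
    theta n α 2 x ≤ 3 / n * (x + 1 / n) := by
  rw [theta_two_eq hn hα]
  calc α * x + 2 * x / n + 2 / n ^ 2
      ≤ 1 / n * x + 2 * x / n + 3 / n ^ 2 := by gcongr; norm_num
    _ = 3 / n * (x + 1 / n) := by ring
end

section
/- Take α = α(n) = 1/n. Then for every real x ≥ 0 the following limits hold as n → ∞: n·Θ_{n,1}^[1/n](x) → 1, n·Θ_{n,2}^[1/n](x) → 3x, n²·Θ_{n,4}^[1/n](x) → 27x², and n³·Θ_{n,6}^[1/n](x) → 405x³. -/
open MeasureTheory Filter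

/-! With `α = 1/n` the weight of the `i`-th term of `U_n^[1/n]` at `x` is `2^(-nx)` times the
`i`-th term `(nx)^(i)/i! (1/2)^i` of the negative binomial series of `(1 - 1/2)^(-nx)`, while
`∫ szaszBasis n i u * u^k = k! C(i+k, k) / n^(k+1)`. Vandermonde's identity
`C(i+k, k) = Σ_j C(i, j) C(k, j)` and the shifted series
`Σ_i r^(i)/i! C(i, j) z^i = r^(j)/j! z^j (1-z)^(-r-j)` give the raw moment `U_n^[1/n](t^k; x)` as
`k! Σ_j C(k, j) (nx)^(j)/j! / n^k`; the binomial theorem then gives every central moment as an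
explicit polynomial in `x` and `1/n`, from which the limits are read off. -/

open Finset Set Topology

lemma risingFac_one_eq_ascPochhammer_eval (r : ℝ) (i : ℕ) :
    risingFac r 1 i = (ascPochhammer ℝ i).eval r := by
  induction i with
  | zero => simp [risingFac]
  | succ i ih => rw [risingFac, prod_range_succ, ← risingFac, ih, ascPochhammer_succ_eval, mul_one]

lemma risingFac_add (x α : ℝ) (j i : ℕ) :
    risingFac x α (j + i) = risingFac x α j * risingFac (x + j * α) α i := by
  rw [risingFac, prod_range_add, ← risingFac, risingFac]
  congr 1
  refine prod_congr rfl fun t _ => ?_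
  push_cast
  ring

lemma risingFac_mul_mul (c x α : ℝ) (i : ℕ) :
    risingFac (c * x) (c * α) i = c ^ i * risingFac x α i := by
  rw [risingFac, risingFac, ← card_range i, ← prod_const, card_range, ← prod_mul_distrib]
  exact prod_congr rfl fun j _ => by ring

lemma Ring.choose_add_sub_one_eq_risingFac_div (r : ℝ) (i : ℕ) :
    Ring.choose (r + i - 1) i = risingFac r 1 i / i.factorial := by
  rw [← Ring.multichoose_eq, risingFac_one_eq_ascPochhammer_eval,
    ← Polynomial.ascPochhammer_smeval_eq_eval,
    ← Ring.factorial_nsmul_multichoose_eq_ascPochhammer, nsmul_eq_mul]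
  field_simp

lemma Nat.add_choose_eq_sum_choose_mul_choose (i k : ℕ) :
    (i + k).choose k = ∑ j ∈ range (k + 1), i.choose j * k.choose j := by
  rw [Nat.add_choose_eq, Nat.sum_antidiagonal_eq_sum_range_succ_mk]
  refine sum_congr rfl fun j hj => ?_
  rw [Nat.choose_symm (Nat.lt_succ_iff.1 (mem_range.1 hj))]

section NegativeBinomialSeries

variable (r : ℝ) {z : ℝ}

lemma hasSum_risingFac_div_factorial_mul_pow (hz : |z| < 1) :
    HasSum (fun i : ℕ => risingFac r 1 i / i.factorial * z ^ i) (1 / (1 - z) ^ r) := by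
  have h := (Real.one_div_one_sub_rpow_hasFPowerSeriesOnBall_zero r).hasSum
    (y := z) (by simpa [enorm_eq_nnnorm, ← NNReal.coe_lt_one] using hz)
  simpa [FormalMultilinearSeries.ofScalars_apply_eq, Ring.choose_add_sub_one_eq_risingFac_div,
    mul_comm] using h

lemma hasSum_risingFac_div_factorial_mul_choose_mul_pow (hz : |z| < 1) (j : ℕ) :
    HasSum (fun i : ℕ => risingFac r 1 i / i.factorial * i.choose j * z ^ i)
      (risingFac r 1 j / j.factorial * z ^ j * (1 / (1 - z) ^ (r + j))) := by
  refine (hasSum_nat_add_iff' j).1 ?_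
  have hzero : ∑ i ∈ range j, risingFac r 1 i / i.factorial * i.choose j * z ^ i = 0 :=
    sum_eq_zero fun i hi => by simp [Nat.choose_eq_zero_of_lt (mem_range.1 hi)]
  rw [hzero, sub_zero]
  have hterm : ∀ l : ℕ, risingFac r 1 (l + j) / (l + j).factorial * (l + j).choose j * z ^ (l + j)
      = risingFac r 1 j / j.factorial * z ^ j * (risingFac (r + j) 1 l / l.factorial * z ^ l) := by
    intro l
    have hfac : ((l + j).factorial : ℝ) = (l + j).choose j * l.factorial * j.factorial := by
      exact_mod_cast (Nat.add_choose_mul_factorial_mul_factorial l j).symm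
    have hchoose : ((l + j).choose j : ℝ) ≠ 0 := by
      exact_mod_cast (Nat.choose_pos (Nat.le_add_left j l)).ne'
    rw [add_comm l j, risingFac_add, add_comm j l, hfac, pow_add]
    field_simp
  simpa only [hterm] using (hasSum_risingFac_div_factorial_mul_pow (r + j) hz).mul_left
    (risingFac r 1 j / j.factorial * z ^ j)

lemma hasSum_risingFac_div_factorial_mul_add_choose_mul_pow (hz : |z| < 1) (k : ℕ) :
    HasSum (fun i : ℕ => risingFac r 1 i / i.factorial * (i + k).choose k * z ^ i)
      (∑ j ∈ range (k + 1),
        k.choose j * (risingFac r 1 j / j.factorial * z ^ j * (1 / (1 - z) ^ (r + j)))) := by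
  have hterm : ∀ i : ℕ, risingFac r 1 i / i.factorial * (i + k).choose k * z ^ i
      = ∑ j ∈ range (k + 1), k.choose j * (risingFac r 1 i / i.factorial * i.choose j * z ^ i) := by
    intro i
    rw [Nat.add_choose_eq_sum_choose_mul_choose, Nat.cast_sum, mul_sum, sum_mul]
    refine sum_congr rfl fun j _ => ?_
    push_cast
    ring
  simpa only [hterm] using hasSum_sum fun j (_ : j ∈ range (k + 1)) =>
    (hasSum_risingFac_div_factorial_mul_choose_mul_pow r hz j).mul_left (k.choose j : ℝ)

end NegativeBinomialSeries

lemma szaszBasis_mul_pow (n i k : ℕ) (u : ℝ) :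
    szaszBasis n i u * u ^ k = n ^ i / i.factorial * (u ^ (i + k) * Real.exp (-(n * u))) := by
  rw [szaszBasis, mul_pow, pow_add, neg_mul]
  ring

lemma integrableOn_szaszBasis_mul_pow {n : ℕ} (hn : 0 < n) (i k : ℕ) :
    IntegrableOn (fun u => szaszBasis n i u * u ^ k) (Ioi 0) := by
  have h := integrableOn_rpow_mul_exp_neg_mul_rpow (s := (i + k : ℕ)) (p := 1) (b := n)
    (by linarith [(Nat.cast_nonneg (i + k) : (0 : ℝ) ≤ _)]) one_pos (by exact_mod_cast hn)
  simp only [Real.rpow_natCast, Real.rpow_one, neg_mul] at h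
  rw [IntegrableOn, funext (szaszBasis_mul_pow n i k)]
  exact h.const_mul _

lemma integral_szaszBasis_mul_pow {n : ℕ} (hn : 0 < n) (i k : ℕ) :
    ∫ u in Ioi 0, szaszBasis n i u * u ^ k = k.factorial * (i + k).choose k / n ^ (k + 1) := by
  have hn' : (0 : ℝ) < n := by exact_mod_cast hn
  have hpow : ∀ u : ℝ, u ^ (i + k) = u ^ (((i + k : ℕ) : ℝ) + 1 - 1) := fun u => by
    rw [add_sub_cancel_right, Real.rpow_natCast]
  simp only [szaszBasis_mul_pow, hpow, integral_const_mul]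
  rw [Real.integral_rpow_mul_exp_neg_mul_Ioi (by positivity) hn', Real.Gamma_nat_eq_factorial,
    ← Nat.cast_succ, Real.rpow_natCast]
  have hfac : ((i + k).factorial : ℝ) = (i + k).choose k * i.factorial * k.factorial := by
    exact_mod_cast (Nat.add_choose_mul_factorial_mul_factorial i k).symm
  rw [Nat.succ_eq_add_one, add_assoc, pow_add, hfac, one_div, inv_pow, inv_pow]
  field_simp

lemma integral_szaszBasis_mul_sub_pow {n : ℕ} (hn : 0 < n) (i m : ℕ) (x : ℝ) :
    ∫ u in Ioi 0, szaszBasis n i u * (u - x) ^ m = ∑ k ∈ range (m + 1),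
      m.choose k * (-x) ^ (m - k) * (k.factorial * (i + k).choose k / n ^ (k + 1)) := by
  have hexpand : ∀ u : ℝ, szaszBasis n i u * (u - x) ^ m
      = ∑ k ∈ range (m + 1), m.choose k * (-x) ^ (m - k) * (szaszBasis n i u * u ^ k) := by
    intro u
    rw [sub_eq_add_neg, add_pow, mul_sum]
    exact sum_congr rfl fun k _ => by ring
  simp only [hexpand]
  rw [integral_finsetSum _ fun k _ => (integrableOn_szaszBasis_mul_pow hn i k).const_mul _]
  simp only [integral_const_mul, integral_szaszBasis_mul_pow hn]

lemma U_one_div_natCast {n : ℕ} (hn : 0 < n) (f : ℝ → ℝ) (x : ℝ) :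
    U n (1 / n) f x = n * (2 : ℝ) ^ (-(n * x)) * ∑' i : ℕ,
      risingFac (n * x) 1 i / i.factorial * (1 / 2) ^ i * ∫ u in Ioi 0, szaszBasis n i u * f u := by
  have hn' : (n : ℝ) ≠ 0 := by exact_mod_cast hn.ne'
  have hbase : 1 + (n : ℝ) * (1 / n) = 2 := by field_simp; norm_num
  have hexp : -x / (1 / (n : ℝ)) = -(n * x) := by field_simp
  have hrising : ∀ i : ℕ, risingFac x (1 / n) i = risingFac (n * x) 1 i / n ^ i := fun i => by
    rw [← mul_one_div_cancel hn', risingFac_mul_mul]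
    field_simp
  rw [U, hbase, hexp, mul_assoc (n : ℝ), ← tsum_mul_left (a := (2 : ℝ) ^ (-(n * x)))]
  congr 1
  refine tsum_congr fun i => ?_
  rw [hrising, show (1 / n + 1 / n : ℝ) = 2 / n by ring, zpow_neg, zpow_natCast, ← inv_pow, inv_div]
  field_simp
  ring

/-- `momentPoly k (n * x) / n ^ k` is the raw moment `U_n^[1/n](t ^ k; x)`. -/
noncomputable def momentPoly (k : ℕ) (r : ℝ) : ℝ :=
  k.factorial * ∑ j ∈ range (k + 1), k.choose j * (risingFac r 1 j / j.factorial)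

lemma hasSum_risingFac_div_factorial_mul_add_choose_mul_half_pow (r : ℝ) (k : ℕ) :
    HasSum (fun i : ℕ => risingFac r 1 i / i.factorial * (i + k).choose k * (1 / 2) ^ i)
      (momentPoly k r / k.factorial * 2 ^ r) := by
  have hhalf : ∀ j : ℕ, (1 / 2 : ℝ) ^ j * (1 / (1 - 1 / 2) ^ (r + j)) = 2 ^ r := fun j => by
    rw [show (1 - 1 / 2 : ℝ) = 2⁻¹ by norm_num, Real.inv_rpow zero_le_two,
      Real.rpow_add two_pos, Real.rpow_natCast]
    field_simp
    rw [← mul_pow]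
    norm_num
  convert hasSum_risingFac_div_factorial_mul_add_choose_mul_pow r
    (by norm_num [abs_of_pos] : |(1 / 2 : ℝ)| < 1) k using 1
  rw [momentPoly, mul_div_cancel_left₀ _ (by positivity), sum_mul]
  refine sum_congr rfl fun j _ => ?_
  rw [mul_assoc (risingFac r 1 j / _), hhalf, mul_assoc]

lemma theta_one_div_natCast {n : ℕ} (hn : 0 < n) (m : ℕ) (x : ℝ) :
    theta n (1 / n) m x =
      ∑ k ∈ range (m + 1), m.choose k * (-x) ^ (m - k) * (momentPoly k (n * x) / n ^ k) := by
  set c : ℕ → ℝ := fun k => m.choose k * (-x) ^ (m - k) * (k.factorial / n ^ (k + 1))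
  have hterm : ∀ i : ℕ, risingFac (n * x) 1 i / i.factorial * (1 / 2) ^ i *
      ∫ u in Ioi 0, szaszBasis n i u * (u - x) ^ m = ∑ k ∈ range (m + 1),
        c k * (risingFac (n * x) 1 i / i.factorial * (i + k).choose k * (1 / 2) ^ i) := by
    intro i
    rw [integral_szaszBasis_mul_sub_pow hn, mul_sum]
    refine sum_congr rfl fun k _ => ?_
    ring
  have hsum := hasSum_sum fun k (_ : k ∈ range (m + 1)) =>
    (hasSum_risingFac_div_factorial_mul_add_choose_mul_half_pow (n * x) k).mul_left (c k)
  rw [theta, U_one_div_natCast hn, tsum_congr hterm, hsum.tsum_eq, mul_sum]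
  refine sum_congr rfl fun k _ => ?_
  have h2 : (2 : ℝ) ^ (-(n * x)) * 2 ^ (n * x) = 1 := by
    rw [Real.rpow_neg zero_le_two, inv_mul_cancel₀ (by positivity)]
  have hn' : (n : ℝ) ≠ 0 := by exact_mod_cast hn.ne'
  calc (n : ℝ) * 2 ^ (-(n * x)) * (c k * (momentPoly k (n * x) / k.factorial * 2 ^ (n * x)))
      = n * c k * momentPoly k (n * x) / k.factorial * (2 ^ (-(n * x)) * 2 ^ (n * x)) := by ring
    _ = _ := by
      rw [h2]
      simp only [c]
      field_simp
      ring

lemma natCast_mul_theta_one {n : ℕ} (hn : 0 < n) (x : ℝ) :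
    (n : ℝ) * theta n (1 / n) 1 x = 1 := by
  have hn' : (n : ℝ) ≠ 0 := by exact_mod_cast hn.ne'
  simp only [theta_one_div_natCast hn, momentPoly, risingFac, sum_range_succ, sum_range_zero,
    prod_range_succ, prod_range_zero]
  norm_num [Nat.choose, Nat.factorial]
  field_simp
  ring

lemma natCast_mul_theta_two {n : ℕ} (hn : 0 < n) (x : ℝ) :
    (n : ℝ) * theta n (1 / n) 2 x = 3 * x + 2 * (n : ℝ)⁻¹ := by
  have hn' : (n : ℝ) ≠ 0 := by exact_mod_cast hn.ne'
  simp only [theta_one_div_natCast hn, momentPoly, risingFac, sum_range_succ, sum_range_zero,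
    prod_range_succ, prod_range_zero]
  norm_num [Nat.choose, Nat.factorial]
  field_simp
  ring

lemma natCast_pow_two_mul_theta_four {n : ℕ} (hn : 0 < n) (x : ℝ) :
    (n : ℝ) ^ 2 * theta n (1 / n) 4 x = 27 * x ^ 2 + 182 * x * (n : ℝ)⁻¹ + 24 * (n : ℝ)⁻¹ ^ 2 := by
  have hn' : (n : ℝ) ≠ 0 := by exact_mod_cast hn.ne'
  simp only [theta_one_div_natCast hn, momentPoly, risingFac, sum_range_succ, sum_range_zero,
    prod_range_succ, prod_range_zero]
  norm_num [Nat.choose, Nat.factorial]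
  field_simp
  ring

lemma natCast_pow_three_mul_theta_six {n : ℕ} (hn : 0 < n) (x : ℝ) :
    (n : ℝ) ^ 3 * theta n (1 / n) 6 x = 405 * x ^ 3 + 9340 * x ^ 2 * (n : ℝ)⁻¹ +
      17484 * x * (n : ℝ)⁻¹ ^ 2 + 720 * (n : ℝ)⁻¹ ^ 3 := by
  have hn' : (n : ℝ) ≠ 0 := by exact_mod_cast hn.ne'
  simp only [theta_one_div_natCast hn, momentPoly, risingFac, sum_range_succ, sum_range_zero,
    prod_range_succ, prod_range_zero]
  norm_num [Nat.choose, Nat.factorial]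
  field_simp
  ring

lemma tendsto_of_eq_comp_inv_natCast {f : ℕ → ℝ} {g : ℝ → ℝ} (hg : Continuous g)
    (hfg : ∀ n : ℕ, 0 < n → f n = g (n : ℝ)⁻¹) : Tendsto f atTop (𝓝 (g 0)) := by
  refine Tendsto.congr' ?_ ((hg.tendsto 0).comp tendsto_inv_atTop_nhds_zero_nat)
  filter_upwards [eventually_gt_atTop 0] with n hn
  exact (hfg n hn).symm

theorem stmt7_general (x : ℝ) :
    Filter.Tendsto (fun n : ℕ => (n : ℝ) * theta n (1 / n) 1 x) Filter.atTop (nhds 1) ∧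
    Filter.Tendsto (fun n : ℕ => (n : ℝ) * theta n (1 / n) 2 x) Filter.atTop (nhds (3 * x)) ∧
    Filter.Tendsto (fun n : ℕ => (n : ℝ) ^ 2 * theta n (1 / n) 4 x) Filter.atTop
      (nhds (27 * x ^ 2)) ∧
    Filter.Tendsto (fun n : ℕ => (n : ℝ) ^ 3 * theta n (1 / n) 6 x) Filter.atTop
      (nhds (405 * x ^ 3)) := by
  refine ⟨?_, ?_, ?_, ?_⟩
  · simpa using tendsto_of_eq_comp_inv_natCast (g := fun _ => 1) continuous_const
      fun n hn => natCast_mul_theta_one hn x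
  · simpa using tendsto_of_eq_comp_inv_natCast (g := fun t => 3 * x + 2 * t) (by fun_prop)
      fun n hn => natCast_mul_theta_two hn x
  · simpa using tendsto_of_eq_comp_inv_natCast
      (g := fun t => 27 * x ^ 2 + 182 * x * t + 24 * t ^ 2) (by fun_prop)
      fun n hn => natCast_pow_two_mul_theta_four hn x
  · simpa using tendsto_of_eq_comp_inv_natCast
      (g := fun t => 405 * x ^ 3 + 9340 * x ^ 2 * t + 17484 * x * t ^ 2 + 720 * t ^ 3)
      (by fun_prop) fun n hn => natCast_pow_three_mul_theta_six hn x

theorem stmt7 (x : ℝ) (hx : 0 ≤ x) :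
    Filter.Tendsto (fun n : ℕ => (n : ℝ) * theta n (1 / n) 1 x) Filter.atTop (nhds 1) ∧
    Filter.Tendsto (fun n : ℕ => (n : ℝ) * theta n (1 / n) 2 x) Filter.atTop (nhds (3 * x)) ∧
    Filter.Tendsto (fun n : ℕ => (n : ℝ) ^ 2 * theta n (1 / n) 4 x) Filter.atTop
      (nhds (27 * x ^ 2)) ∧
    Filter.Tendsto (fun n : ℕ => (n : ℝ) ^ 3 * theta n (1 / n) 6 x) Filter.atTop
      (nhds (405 * x ^ 3)) :=
  stmt7_general x
end
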